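/- For any distinct i, j ∈ {1,…,8}, the map K_{i,j} on L_Y is an involution (K_{i,j} ∘ K_{i,j} = id), preserves the bilinear form (⟨K(λ), K(μ)⟩ = ⟨λ,μ⟩ for all λ, μ ∈ L_Y), and fixes δ = 2H₁ + 2H₂ − E₁ − ⋯ − E₈. -/

import Mathlib

open Finset

/-- `L_Y`: the free ℤ-module with basis `H₁, H₂, E₁, …, E₈`; index `0` is `H₁`,
index `1` is `H₂`, and index `i+1` is `Eᵢ` for `i = 1,…,8`. -/
abbrev LY : Type := Fin 10 → ℤ

noncomputable def basisY : Module.Basis (Fin 10) ℤ LY := Pi.basisFun ℤ (Fin 10)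

/-- The basis vectors of `L_Y`: `bY 0 = H₁`, `bY 1 = H₂`, `bY (i+1) = Eᵢ` for `i = 1,…,8`. -/
noncomputable def bY (a : Fin 10) : LY := basisY a

/-- The symmetric bilinear form on `L_Y` with `⟨H₁,H₂⟩ = 1`, `⟨H₁,H₁⟩ = ⟨H₂,H₂⟩ = 0`,
`⟨Eᵢ,Eᵢ⟩ = -1`, and all other products of distinct basis vectors `0`. -/
noncomputable def formY : LY →ₗ[ℤ] LY →ₗ[ℤ] ℤ :=
  Matrix.toLinearMap₂' ℤ (Matrix.of (fun a b : Fin 10 =>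
    if (a = 0 ∧ b = 1) ∨ (a = 1 ∧ b = 0) then (1 : ℤ)
    else if a = b ∧ a ≠ 0 ∧ a ≠ 1 then -1 else 0))

/-- The anticanonical class `δ = 2H₁ + 2H₂ - E₁ - ⋯ - E₈`. -/
noncomputable def deltaY : LY :=
  (2 : ℤ) • bY 0 + (2 : ℤ) • bY 1 - ∑ k ∈ ({0, 1} : Finset (Fin 10))ᶜ, bY k

/-- The Kac translation `T_α(λ) = λ + ⟨δ,λ⟩α + (⟨δ,λ⟩ - ⟨α,λ⟩)δ` on `L_Y`. -/
noncomputable def kacY (α : LY) : LY →ₗ[ℤ] LY :=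
  LinearMap.id + (formY deltaY).smulRight α + (formY deltaY - formY α).smulRight deltaY

/-- The involution action `K_{i,j}` on `L_Y` (for distinct `i, j ∈ {1,…,8}`, here encoded
by distinct indices `i, j ∉ {0, 1}` of `Fin 10`):
`K(H₁) = 3H₁ + 4H₂ - 3(Eᵢ+Eⱼ) - Σ'Eₖ`, `K(H₂) = 4H₁ + 3H₂ - 3(Eᵢ+Eⱼ) - Σ'Eₖ`,
`K(Eᵢ) = 3H₁ + 3H₂ - 3Eᵢ - 2Eⱼ - Σ'Eₖ`, `K(Eⱼ) = 3H₁ + 3H₂ - 2Eᵢ - 3Eⱼ - Σ'Eₖ`,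
`K(Eₖ) = H₁ + H₂ - Eᵢ - Eⱼ - Eₖ` for `k ∉ {i,j}`, where `Σ'` sums over
`k ∈ {1,…,8} \ {i,j}`. -/
noncomputable def KY (i j : Fin 10) : LY →ₗ[ℤ] LY :=
  basisY.constr ℤ (fun a =>
    if a = 0 then
      (3 : ℤ) • bY 0 + (4 : ℤ) • bY 1 - (3 : ℤ) • (bY i + bY j)
        - ∑ k ∈ ({0, 1, i, j} : Finset (Fin 10))ᶜ, bY k
    else if a = 1 then
      (4 : ℤ) • bY 0 + (3 : ℤ) • bY 1 - (3 : ℤ) • (bY i + bY j)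
        - ∑ k ∈ ({0, 1, i, j} : Finset (Fin 10))ᶜ, bY k
    else if a = i then
      (3 : ℤ) • bY 0 + (3 : ℤ) • bY 1 - (3 : ℤ) • bY i - (2 : ℤ) • bY j
        - ∑ k ∈ ({0, 1, i, j} : Finset (Fin 10))ᶜ, bY k
    else if a = j then
      (3 : ℤ) • bY 0 + (3 : ℤ) • bY 1 - (2 : ℤ) • bY i - (3 : ℤ) • bY j
        - ∑ k ∈ ({0, 1, i, j} : Finset (Fin 10))ᶜ, bY k
    else bY 0 + bY 1 - bY i - bY j - bY a)

/-! ### Auxiliary lemmas -/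

/-- The auxiliary class `α = H₁ + H₂ - Eᵢ - Eⱼ`. -/
noncomputable def alphY (i j : Fin 10) : LY := bY 0 + bY 1 - bY i - bY j

lemma form_bb (a b : Fin 10) : formY (bY a) (bY b) =
    if (a = 0 ∧ b = 1) ∨ (a = 1 ∧ b = 0) then (1 : ℤ)
    else if a = b ∧ a ≠ 0 ∧ a ≠ 1 then -1 else 0 := by
  rw [show bY a = Pi.single a 1 from by simp [bY, basisY],
      show bY b = Pi.single b 1 from by simp [bY, basisY], formY,
      Matrix.toLinearMap₂'_apply]
  rw [Finset.sum_eq_single a (fun x _ hx => by simp [Pi.single_apply, hx]) (by simp)]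
  rw [Finset.sum_eq_single b (fun x _ hx => by simp [Pi.single_apply, hx]) (by simp)]
  simp [Pi.single_apply]

lemma formY_comm (x y : LY) : formY x y = formY y x := by
  have h : formY = formY.flip := by
    apply LinearMap.ext_basis basisY basisY
    intro a b
    show formY (bY a) (bY b) = formY.flip (bY a) (bY b)
    rw [LinearMap.flip_apply, form_bb, form_bb]
    rcases eq_or_ne a b with h | h
    · simp [h]
    · simp [h, h.symm, Ne.symm]
      split_ifs <;> tauto
  conv_lhs => rw [h]
  rfl

lemma formY_delta_b (a : Fin 10) :
    formY deltaY (bY a) = if a = 0 ∨ a = 1 then 2 else 1 := by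
  have hc : ({0, 1} : Finset (Fin 10))ᶜ = {2,3,4,5,6,7,8,9} := by decide
  simp only [deltaY, hc, map_sub, map_add, map_smul, map_sum, LinearMap.sub_apply,
    LinearMap.add_apply, LinearMap.smul_apply, LinearMap.sum_apply, smul_eq_mul]
  fin_cases a <;>
    simp [form_bb, Finset.sum_insert, Finset.mem_insert]

lemma formY_d_d : formY deltaY deltaY = 0 := by
  have hc : ({0, 1} : Finset (Fin 10))ᶜ = {2,3,4,5,6,7,8,9} := by decide
  have e : deltaY = (bY 0 + bY 0) + (bY 1 + bY 1)
      - ∑ k ∈ ({2,3,4,5,6,7,8,9} : Finset (Fin 10)), bY k := by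
    rw [deltaY, hc]; module
  nth_rewrite 2 [e]
  simp only [map_sub, map_add, map_sum]
  simp [formY_delta_b, Finset.sum_insert, Finset.mem_insert]

section
variable {i j : Fin 10} (hi0 : i ≠ 0) (hi1 : i ≠ 1) (hj0 : j ≠ 0) (hj1 : j ≠ 1) (hij : i ≠ j)
include hi0 hi1 hj0 hj1 hij

lemma formY_alph_b (a : Fin 10) :
    formY (alphY i j) (bY a) = if a = 0 ∨ a = 1 ∨ a = i ∨ a = j then 1 else 0 := by
  simp only [alphY, map_sub, map_add, LinearMap.sub_apply, LinearMap.add_apply, form_bb]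
  simp only [hi0, hi1, hj0, hj1]
  split_ifs <;> simp_all <;> omega


lemma formY_d_a : formY deltaY (alphY i j) = 2 := by
  simp [alphY, map_sub, map_add, formY_delta_b, hi0, hi1, hj0, hj1]

lemma formY_a_d : formY (alphY i j) deltaY = 2 := by
  rw [formY_comm]; exact formY_d_a hi0 hi1 hj0 hj1 hij

lemma formY_a_a : formY (alphY i j) (alphY i j) = 0 := by
  nth_rewrite 2 [alphY]
  simp [map_sub, map_add, formY_alph_b hi0 hi1 hj0 hj1 hij]

lemma sum_split :
    ∑ k ∈ ({0, 1} : Finset (Fin 10))ᶜ, bY k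
      = bY i + bY j + ∑ k ∈ ({0, 1, i, j} : Finset (Fin 10))ᶜ, bY k := by
  have hset : ({0, 1} : Finset (Fin 10))ᶜ
      = insert i (insert j (({0, 1, i, j} : Finset (Fin 10))ᶜ)) := by
    ext k
    simp only [Finset.mem_compl, Finset.mem_insert, Finset.mem_singleton, not_or]
    constructor
    · rintro ⟨h0, h1⟩
      by_cases hki : k = i
      · tauto
      · by_cases hkj : k = j <;> tauto
    · rintro (rfl | rfl | ⟨h0, h1, _, _⟩) <;> tauto
  rw [hset, Finset.sum_insert (by simp [hij, hi0, hi1]),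
    Finset.sum_insert (by simp [hj0, hj1])]
  abel

lemma KY_eq (x : LY) :
    KY i j x = -x + (formY (alphY i j) x) • deltaY + (formY deltaY x) • alphY i j := by
  suffices h : KY i j = -LinearMap.id
      + (formY (alphY i j)).smulRight deltaY + (formY deltaY).smulRight (alphY i j) by
    rw [h]; simp
  apply basisY.ext
  intro a
  rw [KY, Module.Basis.constr_basis]
  simp only [LinearMap.add_apply, LinearMap.neg_apply, LinearMap.id_apply,
    LinearMap.smulRight_apply]
  have hb : basisY a = bY a := rfl
  rw [hb, formY_alph_b hi0 hi1 hj0 hj1 hij, formY_delta_b, deltaY,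
    sum_split hi0 hi1 hj0 hj1 hij, alphY]
  by_cases h0 : a = 0
  · rw [h0, if_pos rfl, if_pos (Or.inl rfl), if_pos (Or.inl rfl)]
    module
  by_cases h1 : a = 1
  · rw [h1, if_neg (by decide), if_pos rfl, if_pos (Or.inr (Or.inl rfl)),
      if_pos (Or.inr rfl)]
    module
  by_cases hai : a = i
  · rw [hai, if_neg hi0, if_neg hi1, if_pos rfl,
      if_pos (Or.inr (Or.inr (Or.inl rfl))), if_neg (by tauto)]
    module
  by_cases haj : a = j
  · rw [haj, if_neg hj0, if_neg hj1, if_neg (fun h => hij h.symm), if_pos rfl,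
      if_pos (Or.inr (Or.inr (Or.inr rfl))), if_neg (by tauto)]
    module
  · rw [if_neg h0, if_neg h1, if_neg hai, if_neg haj, if_neg (by tauto),
      if_neg (by tauto)]
    module

end

/-- `K_{i,j}` is an involution of `L_Y`, preserves the bilinear form, and fixes
`δ = 2H₁ + 2H₂ - E₁ - ⋯ - E₈`. -/
theorem KY_involution_isometry_fixes_delta (i j : Fin 10)
    (hi0 : i ≠ 0) (hi1 : i ≠ 1) (hj0 : j ≠ 0) (hj1 : j ≠ 1) (hij : i ≠ j) :
    KY i j ∘ₗ KY i j = LinearMap.id ∧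
    (∀ lam mu : LY, formY (KY i j lam) (KY i j mu) = formY lam mu) ∧
    KY i j deltaY = deltaY := by
  have hK := KY_eq hi0 hi1 hj0 hj1 hij
  have dd := formY_d_d
  have da := formY_d_a hi0 hi1 hj0 hj1 hij
  have ad := formY_a_d hi0 hi1 hj0 hj1 hij
  have aa := formY_a_a hi0 hi1 hj0 hj1 hij
  refine ⟨?_, ?_, ?_⟩
  · apply LinearMap.ext
    intro x
    simp only [LinearMap.comp_apply, LinearMap.id_apply, hK, map_add, map_neg, map_smul,
      smul_eq_mul, dd, da, ad, aa]
    module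
  · intro lam mu
    simp only [hK, map_add, map_neg, map_smul, LinearMap.add_apply, LinearMap.neg_apply,
      LinearMap.smul_apply, smul_eq_mul, dd, da, ad, aa]
    rw [formY_comm lam deltaY, formY_comm lam (alphY i j)]
    ring
  · rw [hK, ad, dd]
    module
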